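/- arXiv:1908.10723 — 2 statements merged into one kernel-verified Lean document; each statement's English description precedes it below -/
import Mathlib

section
/- Let E ⊆ ℂ be a set invariant under rotations (e^{iφ}E = E for all real φ), let p be a prime, d ≥ 1, n a positive integer with n < (2p)^{1/2}, and let F : ℕ × ℝ → ℝ be such that every function h : ℤ/pℤ → E ∪ {0} with |supp h| = n satisfies ‖ĥ‖₁ ≥ F(p, n/p). Then every function f : (ℤ/pℤ)^d → E ∪ {0} with |supp f| = n satisfies ‖f̂‖₁ ≥ F(p, n/p). -/
open scoped BigOperators

/-- Fourier transform of `f : ZMod p → ℂ`. -/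
noncomputable def ft1 {p : ℕ} [NeZero p] (f : ZMod p → ℂ) (ξ : ZMod p) : ℂ :=
  (p : ℂ)⁻¹ * ∑ x : ZMod p,
    f x * Complex.exp (-(2 * Real.pi * Complex.I) * ((ξ * x).val : ℂ) / p)

/-- Wiener norm of `f : ZMod p → ℂ`. -/
noncomputable def wiener1 {p : ℕ} [NeZero p] (f : ZMod p → ℂ) : ℝ :=
  ∑ ξ : ZMod p, ‖ft1 f ξ‖

/-- Fourier transform of `f : (ZMod p)^d → ℂ`. -/
noncomputable def ftd {p d : ℕ} [NeZero p] (f : (Fin d → ZMod p) → ℂ) (ξ : Fin d → ZMod p) : ℂ :=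
  ((p : ℂ) ^ d)⁻¹ * ∑ x : Fin d → ZMod p,
    f x * Complex.exp (-(2 * Real.pi * Complex.I) * (((∑ i, ξ i * x i : ZMod p)).val : ℂ) / p)

/-- Wiener norm of `f : (ZMod p)^d → ℂ`. -/
noncomputable def wienerd {p d : ℕ} [NeZero p] (f : (Fin d → ZMod p) → ℂ) : ℝ :=
  ∑ ξ : Fin d → ZMod p, ‖ftd f ξ‖

/-!
Pick `a` with `x ↦ a ⬝ᵥ x` injective on `supp f`: each of the `n (n - 1) / 2 < p` pairs
`x ≠ y` in the support rules out only the hyperplane `a ⬝ᵥ (x - y) = 0`. For every `b`, push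
`x ↦ ψ (-(b ⬝ᵥ x)) * f x`, with `ψ = ZMod.stdAddChar`, forward along `a ⬝ᵥ ·`. By rotation
invariance of `E` the result is a function `ZMod p → E ∪ {0}` with `n` support points, and its
Fourier transform is `p ^ (d - 1) f̂` restricted to the line `b + ZMod p • a`. Summing its Wiener
norm over all `b` covers every frequency `p` times, so the average over `b` is exactly `‖f̂‖₁`.
-/

open Finset Function

section Pushforward

variable {α β M : Type*} [Fintype α] [DecidableEq β] [AddCommMonoid M]

def pushforward (θ : α → β) (f : α → M) (t : β) : M :=
  ∑ x with θ x = t, f x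

variable {θ : α → β} {f : α → M}

lemma pushforward_apply_of_injOn (hθ : Set.InjOn θ (support f)) {x : α} (hx : f x ≠ 0) :
    pushforward θ f (θ x) = f x := by
  refine sum_eq_single_of_mem x (by simp) fun y hy hyx => ?_
  by_contra hy0
  exact hyx (hθ hy0 hx (mem_filter.1 hy).2)

lemma pushforward_eq_zero {t : β} (ht : t ∉ θ '' support f) : pushforward θ f t = 0 :=
  sum_eq_zero fun x hx => by
    by_contra hx0
    exact ht ⟨x, hx0, (mem_filter.1 hx).2⟩

lemma support_pushforward (hθ : Set.InjOn θ (support f)) :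
    support (pushforward θ f) = θ '' support f := by
  ext t
  refine ⟨fun ht => not_not.1 fun h => ht (pushforward_eq_zero h), ?_⟩
  rintro ⟨x, hx, rfl⟩
  rwa [mem_support, pushforward_apply_of_injOn hθ hx]

lemma pushforward_mem (hθ : Set.InjOn θ (support f)) {s : Set M} (h0 : 0 ∈ s)
    (hf : ∀ x, f x ∈ s) (t : β) : pushforward θ f t ∈ s := by
  by_cases ht : t ∈ θ '' support f
  · obtain ⟨x, hx, rfl⟩ := ht
    rw [pushforward_apply_of_injOn hθ hx]
    exact hf x
  · rwa [pushforward_eq_zero ht]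

lemma sum_pushforward_mul {R : Type*} [Fintype β] [CommSemiring R] (θ : α → β) (f : α → R)
    (h : β → R) : ∑ t, pushforward θ f t * h t = ∑ x, f x * h (θ x) := by
  simp only [pushforward, sum_mul]
  rw [← sum_fiberwise univ θ]
  refine sum_congr rfl fun t _ => sum_congr rfl fun x hx => ?_
  rw [(mem_filter.1 hx).2]

end Pushforward

lemma card_filter_eq_zero_mul_card {G M : Type*} [AddGroup G] [Fintype G] [AddMonoid M]
    [Fintype M] [DecidableEq M] (φ : G →+ M) (hφ : Surjective φ) :
    #{g | φ g = 0} * Fintype.card M = Fintype.card G := by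
  calc #{g | φ g = 0} * Fintype.card M = ∑ c : M, #{g | φ g = c} := by
        rw [mul_comm, ← smul_eq_mul, ← card_univ, ← sum_const]
        exact sum_congr rfl fun c _ =>
          AddMonoidHom.card_fiber_eq_of_mem_range φ ⟨0, map_zero φ⟩ (hφ c)
    _ = Fintype.card G := (card_eq_sum_card_fiberwise (by simp)).symm

lemma card_filter_dotProduct_eq_zero_mul_card {K : Type*} [Field K] [Fintype K] [DecidableEq K]
    {d : ℕ} {v : Fin d → K} (hv : v ≠ 0) :
    #{a | a ⬝ᵥ v = 0} * Fintype.card K = Fintype.card K ^ d := by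
  obtain ⟨j, hj⟩ := Function.ne_iff.1 hv
  let φ : (Fin d → K) →+ K := ⟨⟨(· ⬝ᵥ v), zero_dotProduct v⟩, fun a b => add_dotProduct a b v⟩
  change #{a | φ a = 0} * _ = _
  have hφ : Surjective φ := fun c =>
    ⟨Pi.single j (c / v j), by simp [φ, single_dotProduct, div_mul_cancel₀ c hj]⟩
  simpa using card_filter_eq_zero_mul_card φ hφ

lemma exists_injOn_dotProduct {K : Type*} [Field K] [Fintype K] {d : ℕ}
    (S : Finset (Fin d → K)) (hS : #S * (#S - 1) < 2 * Fintype.card K) :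
    ∃ a : Fin d → K, Set.InjOn (a ⬝ᵥ ·) S := by
  classical
  by_contra! hnone
  set q := Fintype.card K
  let collisions a := #{xy ∈ S.offDiag | a ⬝ᵥ (xy.1 - xy.2) = 0}
  have two_le_collisions (a : Fin d → K) : 2 ≤ collisions a := by
    obtain ⟨x, hx, y, hy, hxy, hne⟩ : ∃ x ∈ S, ∃ y ∈ S, a ⬝ᵥ x = a ⬝ᵥ y ∧ x ≠ y := by
      simpa [Set.InjOn] using hnone a
    refine one_lt_card.2 ⟨(x, y), ?_, (y, x), ?_, by simp [hne]⟩ <;>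
      simp [hx, hy, hne, Ne.symm hne, dotProduct_sub, hxy]
  have double_count : (∑ a, collisions a) * q = #S.offDiag * q ^ d := by
    have := sum_card_bipartiteAbove_eq_sum_card_bipartiteBelow (s := univ) (t := S.offDiag)
      (r := fun a xy => a ⬝ᵥ (xy.1 - xy.2) = 0)
    simp only [bipartiteAbove, bipartiteBelow] at this
    rw [this, sum_mul, card_eq_sum_ones, sum_mul, one_mul]
    refine sum_congr rfl fun xy hxy => ?_
    exact card_filter_dotProduct_eq_zero_mul_card
      (sub_ne_zero.2 (mem_offDiag.1 hxy).2.2)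
  have : 2 * q * q ^ d ≤ #S * (#S - 1) * q ^ d := by
    calc 2 * q * q ^ d = (∑ _a : Fin d → K, 2) * q := by simp [q]; ring
      _ ≤ (∑ a, collisions a) * q := by gcongr; exact two_le_collisions _
      _ = #S * (#S - 1) * q ^ d := by rw [double_count, offDiag_card, Nat.mul_sub_one]
  exact hS.not_ge (Nat.le_of_mul_le_mul_right this (pow_pos Fintype.card_pos d))

lemma mul_mem_of_norm_eq_one {E : Set ℂ}
    (hE : ∀ φ : ℝ, (fun z => Complex.exp (φ * Complex.I) * z) '' E = E)
    {u z : ℂ} (hu : ‖u‖ = 1) (hz : z ∈ E) : u * z ∈ E := by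
  rw [← hE u.arg]
  refine ⟨z, hz, ?_⟩
  conv_rhs => rw [← Complex.norm_mul_exp_arg_mul_I u, hu]
  simp

section Fourier

variable {p d : ℕ} [NeZero p]

lemma exp_neg_two_pi_I_mul_val_div (m : ZMod p) :
    Complex.exp (-(2 * Real.pi * Complex.I) * (m.val : ℂ) / p) = ZMod.stdAddChar (-m) := by
  rw [AddChar.map_neg_eq_inv, ZMod.stdAddChar_apply, ZMod.toCircle_apply, ← Complex.exp_neg]
  ring_nf

lemma ft1_eq_sum_stdAddChar (f : ZMod p → ℂ) (ξ : ZMod p) :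
    ft1 f ξ = (p : ℂ)⁻¹ * ∑ x, f x * ZMod.stdAddChar (-(ξ * x)) := by
  simp only [ft1, exp_neg_two_pi_I_mul_val_div]

lemma ftd_eq_sum_stdAddChar (f : (Fin d → ZMod p) → ℂ) (ξ : Fin d → ZMod p) :
    ftd f ξ = ((p : ℂ) ^ d)⁻¹ * ∑ x, f x * ZMod.stdAddChar (-(ξ ⬝ᵥ x)) := by
  simp only [ftd, exp_neg_two_pi_I_mul_val_div]
  rfl

lemma norm_stdAddChar (m : ZMod p) : ‖(ZMod.stdAddChar m : ℂ)‖ = 1 :=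
  Circle.norm_coe _

lemma stdAddChar_ne_zero (m : ZMod p) : (ZMod.stdAddChar m : ℂ) ≠ 0 :=
  norm_ne_zero_iff.1 (by rw [norm_stdAddChar]; exact one_ne_zero)

noncomputable def projectAlong (a b : Fin d → ZMod p) (f : (Fin d → ZMod p) → ℂ) :
    ZMod p → ℂ :=
  pushforward (a ⬝ᵥ ·) fun x => ZMod.stdAddChar (-(b ⬝ᵥ x)) * f x

lemma support_stdAddChar_mul (b : Fin d → ZMod p) (f : (Fin d → ZMod p) → ℂ) :
    support (fun x => (ZMod.stdAddChar (-(b ⬝ᵥ x)) : ℂ) * f x) = support f := by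
  ext x
  simp [stdAddChar_ne_zero]

lemma ncard_support_projectAlong {a : Fin d → ZMod p} {f : (Fin d → ZMod p) → ℂ}
    (ha : Set.InjOn (a ⬝ᵥ ·) (support f)) (b : Fin d → ZMod p) :
    (support (projectAlong a b f)).ncard = (support f).ncard := by
  rw [← support_stdAddChar_mul b f] at ha
  rw [projectAlong, support_pushforward ha, ha.ncard_image, support_stdAddChar_mul]

lemma projectAlong_mem {E : Set ℂ}
    (hE : ∀ φ : ℝ, (fun z => Complex.exp (φ * Complex.I) * z) '' E = E)
    {a : Fin d → ZMod p} {f : (Fin d → ZMod p) → ℂ} (ha : Set.InjOn (a ⬝ᵥ ·) (support f))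
    (hf : ∀ x, f x ∈ E ∪ {0}) (b : Fin d → ZMod p) (t : ZMod p) :
    projectAlong a b f t ∈ E ∪ {0} := by
  rw [← support_stdAddChar_mul b f] at ha
  refine pushforward_mem ha (Or.inr rfl) (fun x => ?_) t
  rcases hf x with hx | hx
  · exact Or.inl (mul_mem_of_norm_eq_one hE (norm_stdAddChar _) hx)
  · rw [Set.mem_singleton_iff.1 hx, mul_zero]
    exact Or.inr rfl

lemma natCast_mul_ft1_projectAlong (a b : Fin d → ZMod p) (f : (Fin d → ZMod p) → ℂ)
    (ξ : ZMod p) : (p : ℂ) * ft1 (projectAlong a b f) ξ = p ^ d * ftd f (b + ξ • a) := by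
  have hp : (p : ℂ) ≠ 0 := Nat.cast_ne_zero.2 (NeZero.ne p)
  rw [ft1_eq_sum_stdAddChar, ftd_eq_sum_stdAddChar, mul_inv_cancel_left₀ hp,
    mul_inv_cancel_left₀ (pow_ne_zero d hp), projectAlong, sum_pushforward_mul]
  refine sum_congr rfl fun x _ => ?_
  rw [add_dotProduct, smul_dotProduct, smul_eq_mul, neg_add, AddChar.map_add_eq_mul]
  ring

lemma sum_wiener1_projectAlong (a : Fin d → ZMod p) (f : (Fin d → ZMod p) → ℂ) :
    ∑ b, wiener1 (projectAlong a b f) = p ^ d * wienerd f := by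
  have hp : (p : ℝ) ≠ 0 := Nat.cast_ne_zero.2 (NeZero.ne p)
  have translate (c : Fin d → ZMod p) : ∑ b, ‖ftd f (b + c)‖ = wienerd f :=
    Equiv.sum_comp (Equiv.addRight c) fun ξ => ‖ftd f ξ‖
  refine mul_left_cancel₀ hp ?_
  calc (p : ℝ) * ∑ b, wiener1 (projectAlong a b f)
      = ∑ b, ∑ ξ : ZMod p, ‖(p : ℂ) * ft1 (projectAlong a b f) ξ‖ := by
        simp only [wiener1, mul_sum, norm_mul, Complex.norm_natCast]
    _ = p ^ d * ∑ ξ : ZMod p, ∑ b, ‖ftd f (b + ξ • a)‖ := by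
        simp only [natCast_mul_ft1_projectAlong, norm_mul, norm_pow, Complex.norm_natCast,
          mul_sum]
        exact sum_comm
    _ = p * (p ^ d * wienerd f) := by
        simp only [translate, sum_const, card_univ, ZMod.card, nsmul_eq_mul]
        ring

end Fourier

theorem stmt4_general (E : Set ℂ)
    (hE : ∀ φ : ℝ, (fun z => Complex.exp (φ * Complex.I) * z) '' E = E)
    (p : ℕ) [Fact p.Prime] (d : ℕ)
    (n : ℕ) (hnp : (n : ℝ) < Real.sqrt (2 * p))
    (F : ℕ × ℝ → ℝ)
    (h1 : ∀ h : ZMod p → ℂ, (∀ x, h x ∈ E ∪ {0}) →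
      (Function.support h).ncard = n → F (p, (n : ℝ) / p) ≤ wiener1 h)
    (f : (Fin d → ZMod p) → ℂ) (hf : ∀ x, f x ∈ E ∪ {0})
    (hsupp : (Function.support f).ncard = n) :
    F (p, (n : ℝ) / p) ≤ wienerd f := by
  classical
  have hpairs : n * (n - 1) < 2 * p := by
    rw [Real.lt_sqrt n.cast_nonneg] at hnp
    have : n * n < 2 * p := by exact_mod_cast (sq (n : ℝ)) ▸ hnp
    exact lt_of_le_of_lt (Nat.mul_le_mul_left n (Nat.sub_le n 1)) this
  obtain ⟨a, ha⟩ := exists_injOn_dotProduct (support f).toFinset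
    (by rwa [ZMod.card, ← Set.ncard_eq_toFinset_card', hsupp])
  rw [Set.coe_toFinset] at ha
  have hbound (b : Fin d → ZMod p) : F (p, (n : ℝ) / p) ≤ wiener1 (projectAlong a b f) :=
    h1 _ (projectAlong_mem hE ha hf b) (by rw [ncard_support_projectAlong ha, hsupp])
  refine le_of_mul_le_mul_left ?_ (pow_pos (Nat.cast_pos.2 (Fact.out : p.Prime).pos) d)
  calc (p : ℝ) ^ d * F (p, (n : ℝ) / p) = ∑ _b : Fin d → ZMod p, F (p, (n : ℝ) / p) := by
        simp
    _ ≤ ∑ b, wiener1 (projectAlong a b f) := sum_le_sum fun b _ => hbound b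
    _ = p ^ d * wienerd f := sum_wiener1_projectAlong a f

/-- Let `E ⊆ ℂ` be invariant under rotations, `p` prime, `d ≥ 1`,
`0 < n < √(2p)`. If every `h : ZMod p → E ∪ {0}` with `|supp h| = n` satisfies
`‖ĥ‖₁ ≥ F(p, n/p)`, then every `f : (ZMod p)^d → E ∪ {0}` with `|supp f| = n`
satisfies `‖f̂‖₁ ≥ F(p, n/p)`. -/
theorem stmt4 (E : Set ℂ)
    (hE : ∀ φ : ℝ, (fun z => Complex.exp (φ * Complex.I) * z) '' E = E)
    (p : ℕ) [Fact p.Prime] (d : ℕ) (hd : 1 ≤ d)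
    (n : ℕ) (hn : 0 < n) (hnp : (n : ℝ) < Real.sqrt (2 * p))
    (F : ℕ × ℝ → ℝ)
    (h1 : ∀ h : ZMod p → ℂ, (∀ x, h x ∈ E ∪ {0}) →
      (Function.support h).ncard = n → F (p, (n : ℝ) / p) ≤ wiener1 h)
    (f : (Fin d → ZMod p) → ℂ) (hf : ∀ x, f x ∈ E ∪ {0})
    (hsupp : (Function.support f).ncard = n) :
    F (p, (n : ℝ) / p) ≤ wienerd f :=
  stmt4_general E hE p d n hnp F h1 f hf hsupp
end

section
/- Let G be a finite abelian group, K > 0, L > 0, and k a positive integer. Let f : G → ℂ satisfy ‖f̂‖₁ ≤ K, let Q ⊆ supp f be a set such that |f(x)| ≥ L for all x ∈ Q, and define g(x) = 1_Q(x) f(x). Then T_k(g) ≥ |Q|^{2k} L^{4k} / (‖f‖₂² K^{2k−2}). -/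
open scoped BigOperators

/-- Fourier transform of `f : G → ℂ` over a finite abelian group `G`,
with respect to the character `γ`. -/
noncomputable def ftG {G : Type*} [AddCommGroup G] [Fintype G]
    (f : G → ℂ) (γ : AddChar G ℂ) : ℂ :=
  (Fintype.card G : ℂ)⁻¹ * ∑ x : G, f x * (starRingEnd ℂ) (γ x)

/-- Wiener norm of `f : G → ℂ`, i.e. the `ℓ¹`-norm of its Fourier transform. -/
noncomputable def wienerG {G : Type*} [AddCommGroup G] [Fintype G] (f : G → ℂ) : ℝ :=
  ∑ γ : AddChar G ℂ, ‖ftG f γ‖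

/-- `T_k(g) = Σ_{x₁+⋯+x_k = x₁'+⋯+x_k'} g(x₁)⋯g(x_k)·conj(g(x₁'))⋯conj(g(x_k'))`. -/
noncomputable def Tk {G : Type*} [AddCommGroup G] [Fintype G] [DecidableEq G] (k : ℕ) (g : G → ℂ) : ℂ :=
  ∑ x : Fin k → G, ∑ y : Fin k → G,
    if (∑ i, x i) = (∑ i, y i) then
      (∏ i, g (x i)) * ∏ i, (starRingEnd ℂ) (g (y i))
    else 0

/-!
Parseval's identity turns `∑_{x ∈ Q} |f x|² = ⟨g, f⟩` into `|G| ∑_γ ĝ(γ) conj f̂(γ)`, so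
`|Q| L² ≤ |G| ∑_γ |f̂(γ)| |ĝ(γ)|`. The power-mean inequality with weights `|f̂|`, followed by
Cauchy–Schwarz, bounds `(∑ |f̂| |ĝ|)^{2k}` by `‖f̂‖₁^{2k-2} · ∑ |f̂|² · ∑ |ĝ|^{2k}`, and Parseval
again identifies `∑ |f̂|²` with `‖f‖₂² / |G|` and `∑ |ĝ|^{2k}` with `T_k(g) / |G|^{2k-1}`.
-/

open Finset ComplexConjugate

section Holder

variable {ι : Type*} (s : Finset ι) {w z a b : ι → ℝ}

theorem pow_inner_le_weight_pow_mul_inner_pow (hw : ∀ i, 0 ≤ w i) (hz : ∀ i, 0 ≤ z i)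
    {k : ℕ} (hk : k ≠ 0) :
    (∑ i ∈ s, w i * z i) ^ k ≤ (∑ i ∈ s, w i) ^ (k - 1) * ∑ i ∈ s, w i * z i ^ k := by
  have hk' : (1 : ℝ) ≤ k := by exact_mod_cast Nat.one_le_iff_ne_zero.2 hk
  have hk0 : (k : ℝ) ≠ 0 := by positivity
  have holder := Real.inner_le_weight_mul_Lp_of_nonneg s hk' w z hw hz
  simp_rw [Real.rpow_natCast] at holder
  have hW : 0 ≤ ∑ i ∈ s, w i := sum_nonneg fun i _ ↦ hw i
  have hS : 0 ≤ ∑ i ∈ s, w i * z i ^ k :=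
    sum_nonneg fun i _ ↦ mul_nonneg (hw i) (pow_nonneg (hz i) k)
  calc (∑ i ∈ s, w i * z i) ^ k
      ≤ ((∑ i ∈ s, w i) ^ (1 - (k : ℝ)⁻¹) * (∑ i ∈ s, w i * z i ^ k) ^ (k : ℝ)⁻¹) ^ k :=
        pow_le_pow_left₀ (sum_nonneg fun i _ ↦ mul_nonneg (hw i) (hz i)) holder k
    _ = (∑ i ∈ s, w i) ^ (k - 1) * ∑ i ∈ s, w i * z i ^ k := by
        rw [mul_pow, ← Real.rpow_mul_natCast hW, ← Real.rpow_mul_natCast hS,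
          inv_mul_cancel₀ hk0, Real.rpow_one, sub_mul, one_mul, inv_mul_cancel₀ hk0,
          ← Nat.cast_pred (Nat.pos_of_ne_zero hk), Real.rpow_natCast]

theorem pow_inner_le_weight_pow_mul_sum_sq_mul_sum_pow (ha : ∀ i, 0 ≤ a i) (hb : ∀ i, 0 ≤ b i)
    {k : ℕ} (hk : k ≠ 0) :
    (∑ i ∈ s, a i * b i) ^ (2 * k)
      ≤ (∑ i ∈ s, a i) ^ (2 * k - 2) * (∑ i ∈ s, a i ^ 2) * ∑ i ∈ s, b i ^ (2 * k) := by
  calc (∑ i ∈ s, a i * b i) ^ (2 * k) = ((∑ i ∈ s, a i * b i) ^ k) ^ 2 := by ring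
    _ ≤ ((∑ i ∈ s, a i) ^ (k - 1) * ∑ i ∈ s, a i * b i ^ k) ^ 2 :=
        pow_le_pow_left₀ (pow_nonneg (sum_nonneg fun i _ ↦ mul_nonneg (ha i) (hb i)) k)
          (pow_inner_le_weight_pow_mul_inner_pow s ha hb hk) 2
    _ = (∑ i ∈ s, a i) ^ (2 * k - 2) * (∑ i ∈ s, a i * b i ^ k) ^ 2 := by
        rw [mul_pow, ← pow_mul, Nat.sub_one_mul, mul_comm k 2]
    _ ≤ (∑ i ∈ s, a i) ^ (2 * k - 2) * ((∑ i ∈ s, a i ^ 2) * ∑ i ∈ s, (b i ^ k) ^ 2) :=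
        mul_le_mul_of_nonneg_left (sum_mul_sq_le_sq_mul_sq s a (b · ^ k))
          (pow_nonneg (sum_nonneg fun i _ ↦ ha i) _)
    _ = (∑ i ∈ s, a i) ^ (2 * k - 2) * (∑ i ∈ s, a i ^ 2) * ∑ i ∈ s, b i ^ (2 * k) := by
        simp_rw [← pow_mul, mul_comm k 2, mul_assoc]

end Holder

theorem AddChar.map_sum_eq_prod {A M ι : Type*} [AddCommMonoid A] [CommMonoid M] (ψ : AddChar A M)
    (s : Finset ι) (x : ι → A) : ψ (∑ i ∈ s, x i) = ∏ i ∈ s, ψ (x i) := by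
  induction s using Finset.cons_induction with
  | empty => simp
  | cons a s ha ih => rw [sum_cons, prod_cons, AddChar.map_add_eq_mul, ih]

section Fourier

variable {G : Type*} [AddCommGroup G] [Fintype G]

theorem card_mul_ftG (f : G → ℂ) (γ : AddChar G ℂ) :
    (Fintype.card G : ℂ) * ftG f γ = ∑ x, f x * conj (γ x) := by
  rw [ftG, ← mul_assoc, mul_inv_cancel₀ (by simp), one_mul]

theorem sum_addChar_conj_mul [DecidableEq G] (a b : G) :
    ∑ γ : AddChar G ℂ, conj (γ a) * γ b = if a = b then (Fintype.card G : ℂ) else 0 := by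
  simp_rw [← AddChar.map_neg_eq_conj, ← AddChar.map_add_eq_mul, AddChar.sum_apply_eq_ite,
    neg_add_eq_zero]

/-- Orthogonality of characters for the character sums of a function pushed forward along `p`;
`p = id` gives Parseval's identity and `p = ∑` the Fourier expression of `Tk`. -/
theorem sum_addChar_charSum_mul_conj_charSum [DecidableEq G] {ι : Type*} [Fintype ι] (p : ι → G)
    (u v : ι → ℂ) :
    ∑ γ : AddChar G ℂ, (∑ i, u i * conj (γ (p i))) * conj (∑ j, v j * conj (γ (p j)))
      = Fintype.card G * ∑ i, ∑ j, if p i = p j then u i * conj (v j) else 0 := by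
  calc ∑ γ : AddChar G ℂ, (∑ i, u i * conj (γ (p i))) * conj (∑ j, v j * conj (γ (p j)))
      = ∑ γ : AddChar G ℂ, ∑ i, ∑ j, u i * conj (v j) * (conj (γ (p i)) * γ (p j)) := by
        simp_rw [map_sum, map_mul, Complex.conj_conj, sum_mul_sum]
        exact sum_congr rfl fun _ _ ↦ sum_congr rfl fun _ _ ↦ sum_congr rfl fun _ _ ↦ by ring
    _ = ∑ i, ∑ j, u i * conj (v j) * ∑ γ : AddChar G ℂ, conj (γ (p i)) * γ (p j) := by
        rw [sum_comm]
        refine sum_congr rfl fun i _ ↦ ?_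
        rw [sum_comm]
        simp_rw [mul_sum]
    _ = Fintype.card G * ∑ i, ∑ j, if p i = p j then u i * conj (v j) else 0 := by
        simp_rw [sum_addChar_conj_mul, mul_sum, mul_ite, mul_zero, mul_comm]

theorem sum_mul_conj_eq_card_mul_sum_ftG_mul_conj (u v : G → ℂ) :
    ∑ x, u x * conj (v x) = Fintype.card G * ∑ γ : AddChar G ℂ, ftG u γ * conj (ftG v γ) := by
  classical
  have hG : (Fintype.card G : ℂ) ≠ 0 := by simp
  have h := sum_addChar_charSum_mul_conj_charSum id u v
  simp_rw [id, ← card_mul_ftG, sum_ite_eq, mem_univ, if_true, map_mul, map_natCast] at h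
  apply mul_left_cancel₀ hG
  rw [← h, mul_sum, mul_sum]
  exact sum_congr rfl fun _ _ ↦ by ring

theorem sum_norm_sq_eq_card_mul_sum_norm_ftG_sq (f : G → ℂ) :
    ∑ x, ‖f x‖ ^ 2 = Fintype.card G * ∑ γ : AddChar G ℂ, ‖ftG f γ‖ ^ 2 := by
  have h := sum_mul_conj_eq_card_mul_sum_ftG_mul_conj f f
  simp_rw [Complex.mul_conj'] at h
  exact_mod_cast h

theorem card_mul_Tk [DecidableEq G] (k : ℕ) (g : G → ℂ) :
    (Fintype.card G : ℂ) * Tk k g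
      = ((Fintype.card G ^ (2 * k) * ∑ γ : AddChar G ℂ, ‖ftG g γ‖ ^ (2 * k) : ℝ) : ℂ) := by
  have hpow : ∀ γ : AddChar G ℂ, ((Fintype.card G : ℂ) * ftG g γ) ^ k
      = ∑ x : Fin k → G, (∏ i, g (x i)) * conj (γ (∑ i, x i)) := by
    intro γ
    simp_rw [card_mul_ftG, Fintype.sum_pow, prod_mul_distrib, AddChar.map_sum_eq_prod, map_prod]
  have h := sum_addChar_charSum_mul_conj_charSum (fun x : Fin k → G ↦ ∑ i, x i)
    (fun x ↦ ∏ i, g (x i)) (fun x ↦ ∏ i, g (x i))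
  simp only [← hpow, Complex.mul_conj', map_prod] at h
  rw [Tk, ← h]
  push_cast
  rw [mul_sum]
  refine sum_congr rfl fun γ _ ↦ ?_
  rw [norm_pow, norm_mul, Complex.norm_natCast]
  push_cast
  ring

theorem sum_norm_sq_le_card_mul_sum_norm_ftG_mul [DecidableEq G] (f : G → ℂ) (Q : Finset G)
    (g : G → ℂ) (hg : ∀ x, g x = if x ∈ Q then f x else 0) :
    ∑ x ∈ Q, ‖f x‖ ^ 2 ≤ Fintype.card G * ∑ γ : AddChar G ℂ, ‖ftG f γ‖ * ‖ftG g γ‖ := by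
  have h := sum_mul_conj_eq_card_mul_sum_ftG_mul_conj g f
  simp_rw [hg, ite_mul, zero_mul, sum_ite_mem, univ_inter, Complex.mul_conj'] at h
  calc ∑ x ∈ Q, ‖f x‖ ^ 2 = ‖((∑ x ∈ Q, ‖f x‖ ^ 2 : ℝ) : ℂ)‖ := by
        rw [Complex.norm_real, Real.norm_of_nonneg (sum_nonneg fun _ _ ↦ sq_nonneg _)]
    _ ≤ _ := by
        push_cast
        rw [h, norm_mul, Complex.norm_natCast]
        refine mul_le_mul_of_nonneg_left ((norm_sum_le _ _).trans_eq ?_) (Nat.cast_nonneg _)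
        simp_rw [norm_mul, Complex.norm_conj, mul_comm]

end Fourier

theorem stmt5_general (G : Type) [AddCommGroup G] [Fintype G] [DecidableEq G]
    (K L : ℝ) (hL : 0 < L) (k : ℕ) (hk : 1 ≤ k)
    (f : G → ℂ) (hfK : wienerG f ≤ K)
    (Q : Finset G)
    (hQL : ∀ x ∈ Q, L ≤ ‖f x‖)
    (g : G → ℂ) (hg : ∀ x, g x = if x ∈ Q then f x else 0) :
    (Q.card : ℝ) ^ (2 * k) * L ^ (4 * k) /
        ((∑ x : G, ‖f x‖ ^ 2) * K ^ (2 * k - 2))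
      ≤ (Tk k g).re := by
  set N : ℝ := (Fintype.card G : ℝ)
  set A : AddChar G ℂ → ℝ := fun γ ↦ ‖ftG f γ‖
  set B : AddChar G ℂ → ℝ := fun γ ↦ ‖ftG g γ‖
  have hT : N * (Tk k g).re = N ^ (2 * k) * ∑ γ, B γ ^ (2 * k) := by
    simpa only [Complex.mul_re, Complex.natCast_re, Complex.natCast_im, zero_mul, sub_zero,
      Complex.ofReal_re] using congrArg Complex.re (card_mul_Tk k g)
  have hT0 : 0 ≤ (Tk k g).re :=
    (mul_nonneg_iff_of_pos_left (by positivity : (0 : ℝ) < N)).1 (hT ▸ by positivity)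
  have hQ : (Q.card : ℝ) * L ^ 2 ≤ N * ∑ γ, A γ * B γ :=
    calc (Q.card : ℝ) * L ^ 2 ≤ ∑ x ∈ Q, ‖f x‖ ^ 2 := by
          rw [← nsmul_eq_mul, ← sum_const]
          exact sum_le_sum fun x hx ↦ pow_le_pow_left₀ hL.le (hQL x hx) 2
      _ ≤ N * ∑ γ, A γ * B γ := sum_norm_sq_le_card_mul_sum_norm_ftG_mul f Q g hg
  have hK0 : 0 ≤ K := (sum_nonneg fun _ _ ↦ norm_nonneg _).trans hfK
  refine div_le_of_le_mul₀ (by positivity) hT0 ?_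
  calc (Q.card : ℝ) ^ (2 * k) * L ^ (4 * k) = (Q.card * L ^ 2) ^ (2 * k) := by ring
    _ ≤ (N * ∑ γ, A γ * B γ) ^ (2 * k) := pow_le_pow_left₀ (by positivity) hQ _
    _ ≤ N ^ (2 * k) * ((∑ γ, A γ) ^ (2 * k - 2) * (∑ γ, A γ ^ 2) * ∑ γ, B γ ^ (2 * k)) := by
        rw [mul_pow]
        gcongr
        exact pow_inner_le_weight_pow_mul_sum_sq_mul_sum_pow _ (fun _ ↦ norm_nonneg _)
          (fun _ ↦ norm_nonneg _) (by omega)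
    _ ≤ N ^ (2 * k) * (K ^ (2 * k - 2) * (∑ γ, A γ ^ 2) * ∑ γ, B γ ^ (2 * k)) := by
        gcongr
        exact hfK
    _ = (Tk k g).re * ((∑ x, ‖f x‖ ^ 2) * K ^ (2 * k - 2)) := by
        rw [sum_norm_sq_eq_card_mul_sum_norm_ftG_sq f]
        linear_combination -(K ^ (2 * k - 2) * ∑ γ, A γ ^ 2) * hT

/-- Let `G` be a finite abelian group, `K, L > 0`, `k ≥ 1`. If
`f : G → ℂ` satisfies `‖f̂‖₁ ≤ K`, `Q ⊆ supp f` with `|f(x)| ≥ L` on `Q`, and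
`g = 1_Q · f`, then `T_k(g) ≥ |Q|^{2k} L^{4k} / (‖f‖₂² K^{2k-2})`. -/
theorem stmt5 (G : Type) [AddCommGroup G] [Fintype G] [DecidableEq G]
    (K L : ℝ) (hK : 0 < K) (hL : 0 < L) (k : ℕ) (hk : 1 ≤ k)
    (f : G → ℂ) (hfK : wienerG f ≤ K)
    (Q : Finset G) (hQsupp : ↑Q ⊆ Function.support f)
    (hQL : ∀ x ∈ Q, L ≤ ‖f x‖)
    (g : G → ℂ) (hg : ∀ x, g x = if x ∈ Q then f x else 0) :
    (Q.card : ℝ) ^ (2 * k) * L ^ (4 * k) /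
        ((∑ x : G, ‖f x‖ ^ 2) * K ^ (2 * k - 2))
      ≤ (Tk k g).re :=
  stmt5_general G K L hL k hk f hfK Q hQL g hg
end
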